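/- arXiv:2302.13880 — 3 statements merged into one kernel-verified Lean document; each statement's English description precedes it below -/
import Mathlib

section
/- Let V be a finite type of vertices. Let O be a finite family of pairwise disjoint nonempty finite subsets of V (the cycles of an optimal solution), let C be a finite family of finite subsets of V each of cardinality at most 3 (the cycles chosen by the greedy algorithm), and let ω be a nonnegative real-valued weight function on finite subsets of V. Suppose there is a map f : O → C such that for every o ∈ O, the set f(o) intersects o and ω(o) ≤ ω(f(o)) (this encodes that when the greedy algorithm could no longer pick o, some already-chosen cycle of at least o's weight overlapped o). Then ∑_{o ∈ O} ω(o) ≤ 3 · ∑_{c ∈ C} ω(c). In other words, the greedy algorithm for the kidney exchange problem with maximum cycle size 3 is a 1/3-approximation. -/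
/-!
Map every optimal cycle `o` to the greedy cycle `f o`, which is at least as heavy. The optimal
cycles sent to one greedy cycle `c` are disjoint and each meets `c`, so there are at most
`#c ≤ 3` of them; hence every greedy weight is counted at most three times.
-/

open Finset

namespace Finset

theorem card_le_card_of_pairwiseDisjoint_of_inter_nonempty {α : Type*} [DecidableEq α]
    {O : Finset (Finset α)} (hO : (O : Set (Finset α)).PairwiseDisjoint id) {c : Finset α}
    (hc : ∀ o ∈ O, (c ∩ o).Nonempty) : #O ≤ #c := by
  have hdisj : (O : Set (Finset α)).PairwiseDisjoint (c ∩ ·) :=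
    hO.mono fun o => inter_subset_right
  calc #O = ∑ _o ∈ O, 1 := card_eq_sum_ones O
    _ ≤ ∑ o ∈ O, #(c ∩ o) := sum_le_sum fun o ho => card_pos.2 (hc o ho)
    _ = #(O.biUnion (c ∩ ·)) := (card_biUnion hdisj).symm
    _ ≤ #c := card_le_card (biUnion_subset.2 fun _ _ => inter_subset_left)

theorem sum_comp_le_nsmul_sum_of_card_fiber_le {ι β M : Type*} [DecidableEq β]
    [AddCommMonoid M] [PartialOrder M] [IsOrderedAddMonoid M]
    {s : Finset ι} {t : Finset β} {f : ι → β} (hf : ∀ i ∈ s, f i ∈ t) {n : ℕ}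
    (hn : ∀ b ∈ t, #{i ∈ s | f i = b} ≤ n) {w : β → M} (hw : ∀ b ∈ t, 0 ≤ w b) :
    ∑ i ∈ s, w (f i) ≤ n • ∑ b ∈ t, w b := by
  calc ∑ i ∈ s, w (f i) = ∑ b ∈ t, ∑ i ∈ s with f i = b, w (f i) :=
        (sum_fiberwise_of_maps_to hf _).symm
    _ = ∑ b ∈ t, #{i ∈ s | f i = b} • w b := by
        refine sum_congr rfl fun b _ => ?_
        rw [← sum_const]
        exact sum_congr rfl fun i hi => by rw [(mem_filter.1 hi).2]
    _ ≤ ∑ b ∈ t, n • w b := sum_le_sum fun b hb => nsmul_le_nsmul_left (hw b hb) (hn b hb)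
    _ = n • ∑ b ∈ t, w b := (smul_sum ..).symm

end Finset

theorem greedy_third_approx_general {V : Type*} [DecidableEq V]
    (O C : Finset (Finset V))
    (hO_disj : (O : Set (Finset V)).Pairwise (Function.onFun Disjoint id))
    (hC_card : ∀ c ∈ C, c.card ≤ 3)
    (ω : Finset V → ℝ) (hω : ∀ s : Finset V, 0 ≤ ω s)
    (f : Finset V → Finset V)
    (hf_mem : ∀ o ∈ O, f o ∈ C)
    (hf_inter : ∀ o ∈ O, (f o ∩ o).Nonempty)
    (hf_wt : ∀ o ∈ O, ω o ≤ ω (f o)) :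
    ∑ o ∈ O, ω o ≤ 3 * ∑ c ∈ C, ω c := by
  have hfiber : ∀ c ∈ C, #{o ∈ O | f o = c} ≤ 3 := fun c hc =>
    calc #{o ∈ O | f o = c} ≤ #c :=
          card_le_card_of_pairwiseDisjoint_of_inter_nonempty
            (hO_disj.mono (coe_subset.2 (filter_subset _ O))) fun o ho => by
              obtain ⟨hoO, rfl⟩ := mem_filter.1 ho
              exact hf_inter o hoO
      _ ≤ 3 := hC_card c hc
  calc ∑ o ∈ O, ω o ≤ ∑ o ∈ O, ω (f o) := sum_le_sum hf_wt
    _ ≤ 3 • ∑ c ∈ C, ω c :=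
        sum_comp_le_nsmul_sum_of_card_fiber_le hf_mem hfiber fun c _ => hω c
    _ = 3 * ∑ c ∈ C, ω c := nsmul_eq_mul ..

/-- The greedy algorithm for the kidney exchange problem with maximum cycle
size 3 is a 1/3-approximation: if every optimal cycle `o` is mapped to a
greedily chosen cycle `f o` that intersects `o` and has at least `o`'s weight,
then the total optimal weight is at most three times the greedy weight. -/
theorem greedy_third_approx {V : Type*} [Fintype V] [DecidableEq V]
    (O C : Finset (Finset V))
    (hO_disj : (O : Set (Finset V)).Pairwise (Function.onFun Disjoint id))
    (hO_ne : ∀ o ∈ O, o.Nonempty)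
    (hC_card : ∀ c ∈ C, c.card ≤ 3)
    (ω : Finset V → ℝ) (hω : ∀ s : Finset V, 0 ≤ ω s)
    (f : Finset V → Finset V)
    (hf_mem : ∀ o ∈ O, f o ∈ C)
    (hf_inter : ∀ o ∈ O, (f o ∩ o).Nonempty)
    (hf_wt : ∀ o ∈ O, ω o ≤ ω (f o)) :
    ∑ o ∈ O, ω o ≤ 3 * ∑ c ∈ C, ω c :=
  greedy_third_approx_general O C hO_disj hC_card ω hω f hf_mem hf_inter hf_wt
end

section
/- Let V be a finite type, let O be a finite family of pairwise disjoint nonempty finite subsets of V, let c be a finite subset of V with cardinality at most 3, and let ω be a real-valued weight function on finite subsets of V. If ω(o) ≤ ω(c) for every o ∈ O with o ∩ c ≠ ∅, and ω(c) ≥ 0, then ∑_{o ∈ O, o ∩ c ≠ ∅} ω(o) ≤ 3 · ω(c). -/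
/-! Distinct optimal cycles meeting `c` are disjoint, so each of them uses up at least one of
the at most three vertices of `c`; hence at most three of them meet `c`, and each weighs at
most `ω c`. -/

theorem Finset.card_filter_inter_nonempty_le_card {α : Type*} [DecidableEq α]
    {O : Finset (Finset α)} (hO : (O : Set (Finset α)).PairwiseDisjoint id) (c : Finset α) :
    {o ∈ O | (o ∩ c).Nonempty}.card ≤ c.card := by
  refine card_le_card_of_forall_subsingleton (fun o v => v ∈ o) ?_ ?_
  · intro o ho
    obtain ⟨v, hv⟩ := (mem_filter.1 ho).2
    exact ⟨v, (mem_inter.1 hv).2, (mem_inter.1 hv).1⟩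
  · rintro v - o ⟨ho, hvo⟩ o' ⟨ho', hvo'⟩
    exact hO.elim_finset (mem_filter.1 ho).1 (mem_filter.1 ho').1 v hvo hvo'

theorem sum_inter_le_three_mul_general {V : Type*} [DecidableEq V]
    (O : Finset (Finset V))
    (hO_disj : (O : Set (Finset V)).Pairwise (Function.onFun Disjoint id))
    (c : Finset V) (hc : c.card ≤ 3)
    (ω : Finset V → ℝ)
    (hωle : ∀ o ∈ O, (o ∩ c).Nonempty → ω o ≤ ω c)
    (hωc : 0 ≤ ω c) :
    ∑ o ∈ O.filter (fun o => (o ∩ c).Nonempty), ω o ≤ 3 * ω c := by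
  have hcard : ((O.filter fun o => (o ∩ c).Nonempty).card : ℝ) ≤ 3 := by
    exact_mod_cast (Finset.card_filter_inter_nonempty_le_card hO_disj c).trans hc
  calc ∑ o ∈ O.filter (fun o => (o ∩ c).Nonempty), ω o
      ≤ (O.filter fun o => (o ∩ c).Nonempty).card • ω c :=
        Finset.sum_le_card_nsmul _ _ _ fun o ho => (Finset.mem_filter.1 ho).elim (hωle o)
    _ ≤ 3 * ω c := by
        rw [nsmul_eq_mul]
        exact mul_le_mul_of_nonneg_right hcard hωc

/-- If every optimal cycle intersecting `c` has weight at most `ω c`, `c` has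
at most `3` vertices, and `ω c ≥ 0`, then the total weight of the optimal
cycles intersecting `c` is at most `3 * ω c`. -/
theorem sum_inter_le_three_mul {V : Type*} [Fintype V] [DecidableEq V]
    (O : Finset (Finset V))
    (hO_disj : (O : Set (Finset V)).Pairwise (Function.onFun Disjoint id))
    (hO_ne : ∀ o ∈ O, o.Nonempty)
    (c : Finset V) (hc : c.card ≤ 3)
    (ω : Finset V → ℝ)
    (hωle : ∀ o ∈ O, (o ∩ c).Nonempty → ω o ≤ ω c)
    (hωc : 0 ≤ ω c) :
    ∑ o ∈ O.filter (fun o => (o ∩ c).Nonempty), ω o ≤ 3 * ω c :=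
  sum_inter_le_three_mul_general O hO_disj c hc ω hωle hωc
end

section
/- Let V be a finite type. Let O be a finite family of pairwise disjoint nonempty finite subsets of V, let C be a finite family of finite subsets of V each of cardinality at most 2, and let ω be a nonnegative real-valued weight function on finite subsets of V. Suppose there is a map f : O → C such that for every o ∈ O, the set f(o) intersects o and ω(o) ≤ ω(f(o)). Then ∑_{o ∈ O} ω(o) ≤ 2 · ∑_{c ∈ C} ω(c). In other words, for the special case of crossover exchanges (exchange cycles of size exactly 2), the greedy algorithm is a 1/2-approximation. -/
/-!
Every `o ∈ O` is charged to `f o`, whose weight dominates its own. Since the sets of `O` are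
pairwise disjoint and each set charged to `c` meets `c`, they meet it in distinct points, so at
most `#c ≤ 2` of them are charged to `c`.
-/

open Finset

theorem Finset.card_le_card_of_pairwiseDisjoint_of_inter_nonempty_s4 {α : Type*} [DecidableEq α]
    {S : Finset (Finset α)} {c : Finset α} (hS : (S : Set (Finset α)).PairwiseDisjoint id)
    (hc : ∀ s ∈ S, (c ∩ s).Nonempty) : #S ≤ #c := by
  refine card_le_card_of_forall_subsingleton (fun s v => v ∈ s) (fun s hs => ?_) ?_
  · obtain ⟨v, hv⟩ := hc s hs
    exact ⟨v, mem_inter.1 hv⟩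
  · intro v _ s₁ hs₁ s₂ hs₂
    by_contra hne
    exact disjoint_left.1 (hS hs₁.1 hs₂.1 hne) hs₁.2 hs₂.2

theorem Finset.sum_le_mul_sum_of_card_fiber_le {ι κ R : Type*} [DecidableEq κ] [CommSemiring R]
    [PartialOrder R] [IsOrderedRing R] {s : Finset ι} {t : Finset κ} {g : ι → κ}
    (hg : ∀ i ∈ s, g i ∈ t) {n : ℕ} (hn : ∀ j ∈ t, #{i ∈ s | g i = j} ≤ n) {a : ι → R}
    {b : κ → R} (hb : ∀ j ∈ t, 0 ≤ b j) (hab : ∀ i ∈ s, a i ≤ b (g i)) :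
    ∑ i ∈ s, a i ≤ n * ∑ j ∈ t, b j :=
  calc ∑ i ∈ s, a i ≤ ∑ i ∈ s, b (g i) := sum_le_sum hab
    _ = ∑ j ∈ t, #{i ∈ s | g i = j} • b j := by
      rw [← sum_fiberwise_of_maps_to hg]
      refine sum_congr rfl fun j _ => ?_
      rw [sum_congr rfl fun i hi => congrArg b (mem_filter.1 hi).2, sum_const]
    _ ≤ ∑ j ∈ t, n • b j := sum_le_sum fun j hj => nsmul_le_nsmul_left (hb j hj) (hn j hj)
    _ = n * ∑ j ∈ t, b j := by rw [← smul_sum, nsmul_eq_mul]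

theorem greedy_half_approx_general {V : Type*} [DecidableEq V]
    (O C : Finset (Finset V))
    (hO_disj : (O : Set (Finset V)).Pairwise (Function.onFun Disjoint id))
    (hC_card : ∀ c ∈ C, c.card ≤ 2)
    (ω : Finset V → ℝ) (hω : ∀ s : Finset V, 0 ≤ ω s)
    (f : Finset V → Finset V)
    (hf_mem : ∀ o ∈ O, f o ∈ C)
    (hf_inter : ∀ o ∈ O, (f o ∩ o).Nonempty)
    (hf_wt : ∀ o ∈ O, ω o ≤ ω (f o)) :
    ∑ o ∈ O, ω o ≤ 2 * ∑ c ∈ C, ω c := by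
  have hfiber : ∀ c ∈ C, #{o ∈ O | f o = c} ≤ 2 := fun c hc =>
    (card_le_card_of_pairwiseDisjoint_of_inter_nonempty_s4 (hO_disj.mono (filter_subset _ O))
      fun o ho => (mem_filter.1 ho).2 ▸ hf_inter o (mem_filter.1 ho).1).trans (hC_card c hc)
  exact_mod_cast sum_le_mul_sum_of_card_fiber_le hf_mem hfiber (fun c _ => hω c) hf_wt

/-- For crossover exchanges (cycles of size at most 2), the greedy algorithm
is a 1/2-approximation. -/
theorem greedy_half_approx {V : Type*} [Fintype V] [DecidableEq V]
    (O C : Finset (Finset V))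
    (hO_disj : (O : Set (Finset V)).Pairwise (Function.onFun Disjoint id))
    (hO_ne : ∀ o ∈ O, o.Nonempty)
    (hC_card : ∀ c ∈ C, c.card ≤ 2)
    (ω : Finset V → ℝ) (hω : ∀ s : Finset V, 0 ≤ ω s)
    (f : Finset V → Finset V)
    (hf_mem : ∀ o ∈ O, f o ∈ C)
    (hf_inter : ∀ o ∈ O, (f o ∩ o).Nonempty)
    (hf_wt : ∀ o ∈ O, ω o ≤ ω (f o)) :
    ∑ o ∈ O, ω o ≤ 2 * ∑ c ∈ C, ω c :=
  greedy_half_approx_general O C hO_disj hC_card ω hω f hf_mem hf_inter hf_wt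
end
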